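/- arXiv:2102.00733 — 4 statements merged into one kernel-verified Lean document; each statement's English description precedes it below -/
import Mathlib

section
/- The space of splines of smoothness order k over knots ξ₀ < ξ₁ < ... < ξ_{n+1} (piecewise polynomials of degree at most k with continuous derivatives up to order k−1 at the internal knots) with zero boundary conditions (all derivatives of order 0 through k−1 vanish at ξ₀ and ξ_{n+1}) has dimension n − k + 1, provided n ≥ k. -/
open Polynomial

def IsSplineAux (k n : ℕ) (ξ : ℕ → ℝ) (p : ℕ → Polynomial ℝ) (S : ℝ → ℝ) : Prop :=
  (∀ i ≤ n, (p i).natDegree ≤ k) ∧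
  S (ξ 0) = (p 0).eval (ξ 0) ∧
  (∀ i ≤ n, ∀ t ∈ Set.Ioc (ξ i) (ξ (i + 1)), S t = (p i).eval t) ∧
  (∀ i < n, ∀ j < k,
    (derivative^[j] (p i)).eval (ξ (i + 1)) = (derivative^[j] (p (i + 1))).eval (ξ (i + 1)))

def ZeroBC (k n : ℕ) (ξ : ℕ → ℝ) (p : ℕ → Polynomial ℝ) : Prop :=
  ∀ j < k, (derivative^[j] (p 0)).eval (ξ 0) = 0 ∧
    (derivative^[j] (p n)).eval (ξ (n + 1)) = 0

def SplineU (k n : ℕ) (ξ : ℕ → ℝ) : Set (ℝ → ℝ) :=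
  {S | (∀ t, t ∉ Set.Icc (ξ 0) (ξ (n + 1)) → S t = 0) ∧
    ∃ p : ℕ → Polynomial ℝ, IsSplineAux k n ξ p S}

def SplineZB (k n : ℕ) (ξ : ℕ → ℝ) : Set (ℝ → ℝ) :=
  {S | (∀ t, t ∉ Set.Icc (ξ 0) (ξ (n + 1)) → S t = 0) ∧
    ∃ p : ℕ → Polynomial ℝ, IsSplineAux k n ξ p S ∧ ZeroBC k n ξ p}

/-!
A spline with zero left boundary data is `c₀ (t - ξ₀)^k` on the first piece, and the
`C^{k-1}` condition at an internal knot `ξ_m` lets the next piece differ from the previous one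
only by `c_m (t - ξ_m)^k`. So these splines are exactly the combinations `∑ c_m (t - ξ_m)₊^k`
of truncated powers, which are linearly independent (their values at `ξ₁, …, ξ_{n+1}` form a
triangular matrix). The `k` right boundary conditions become `∑ c_m (ξ_{n+1} - ξ_m)^(e+1) = 0`
for `e < k`; the first `k` columns of this system form a nonsingular Vandermonde-type matrix,
so its solutions have dimension `n + 1 - k`.
-/
namespace Polynomial

variable {R : Type*} [CommRing R] [IsDomain R] [CharZero R]

theorem eq_C_mul_X_sub_C_pow_of_iterate_derivative_eval_eq_zero {p : R[X]} {a : R} {k : ℕ}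
    (hdeg : p.natDegree ≤ k) (h : ∀ j < k, (derivative^[j] p).eval a = 0) :
    p = C (p.coeff k) * (X - C a) ^ k := by
  obtain ⟨q, rfl⟩ : (X - C a) ^ k ∣ p := by
    rcases eq_or_ne p 0 with rfl | hp
    · exact dvd_zero _
    rcases k with _ | k
    · exact one_dvd _
    refine (le_rootMultiplicity_iff hp).1 <|
      lt_rootMultiplicity_of_isRoot_iterate_derivative_of_mem_nonZeroDivisors hp
        (fun j hj => h j (by omega))
        (mem_nonZeroDivisors_of_ne_zero (Nat.cast_ne_zero.mpr (Nat.factorial_ne_zero _)))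
  rcases eq_or_ne q 0 with rfl | hq
  · simp
  have hmonic := (monic_X_sub_C a).pow k
  have hq0 : q.natDegree = 0 := by
    rw [hmonic.natDegree_mul' hq, natDegree_pow, natDegree_X_sub_C] at hdeg
    omega
  have hlead : ((X - C a) ^ k).coeff k = 1 := by
    simpa [natDegree_pow] using hmonic.coeff_natDegree
  rw [eq_C_of_natDegree_eq_zero hq0, coeff_mul_C, hlead, one_mul, mul_comm]

end Polynomial

namespace Matrix

theorem det_of_pow_succ {R : Type*} [CommRing R] {k : ℕ} (x : Fin k → R) :
    (of fun e i : Fin k => x i ^ ((e : ℕ) + 1)).det = (vandermonde x).det * ∏ i, x i := by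
  have : (of fun e i : Fin k => x i ^ ((e : ℕ) + 1)) = (vandermonde x)ᵀ * diagonal x := by
    ext e i
    simp [pow_succ]
  rw [this, det_mul, det_transpose, det_diagonal]

theorem mulVec_surjective_of_isUnit_det_submatrix {R m n : Type*} [CommRing R] [Fintype m]
    [DecidableEq m] [Fintype n] {B : Matrix m n R} (f : m → n)
    (h : IsUnit (B.submatrix id f).det) : Function.Surjective B.mulVec := by
  intro y
  have hy : y ∈ LinearMap.range (B.submatrix id f).mulVecLin :=
    mulVec_surjective_iff_isUnit.mpr ((isUnit_iff_isUnit_det _).mpr h) y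
  rw [range_mulVecLin] at hy
  change y ∈ LinearMap.range B.mulVecLin
  rw [range_mulVecLin]
  exact Submodule.span_mono (Set.range_comp_subset_range f B.col) hy

end Matrix

theorem linearIndependent_of_det_apply_ne_zero {ι X R : Type*} [Fintype ι] [DecidableEq ι]
    [CommRing R] [IsDomain R] (v : ι → X → R) (x : ι → X)
    (h : (Matrix.of fun m i => v i (x m)).det ≠ 0) : LinearIndependent R v :=
  (Matrix.linearIndependent_cols_of_det_ne_zero h).of_comp
    (LinearMap.pi fun m => LinearMap.proj (x m))

namespace Spline

open Set
open scoped Matrix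

def InPiece (ξ : ℕ → ℝ) (i : ℕ) (t : ℝ) : Prop :=
  t ∈ Ioc (ξ i) (ξ (i + 1)) ∨ (i = 0 ∧ t = ξ 0)

theorem exists_inPiece {n : ℕ} {ξ : ℕ → ℝ} {t : ℝ} (ht : t ∈ Icc (ξ 0) (ξ (n + 1))) :
    ∃ i ≤ n, InPiece ξ i t := by
  induction n with
  | zero =>
    refine ⟨0, le_rfl, ?_⟩
    rcases ht.1.eq_or_lt with h | h
    · exact Or.inr ⟨rfl, h.symm⟩
    · exact Or.inl ⟨h, ht.2⟩
  | succ n ih =>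
    by_cases h : t ≤ ξ (n + 1)
    · obtain ⟨i, hi, hti⟩ := ih ⟨ht.1, h⟩
      exact ⟨i, by omega, hti⟩
    · exact ⟨n + 1, le_rfl, Or.inl ⟨not_le.1 h, ht.2⟩⟩

theorem _root_.IsSplineAux.apply_eq_eval_of_inPiece {k n : ℕ} {ξ : ℕ → ℝ} {p : ℕ → ℝ[X]}
    {S : ℝ → ℝ} (hS : IsSplineAux k n ξ p S) {i : ℕ} {t : ℝ} (hi : i ≤ n)
    (ht : InPiece ξ i t) : S t = (p i).eval t := by
  rcases ht with ht | ⟨rfl, rfl⟩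
  exacts [hS.2.2.1 i hi t ht, hS.2.1]

/-- `(t - ξ i)₊^k` on the knot range; the left end is included only for `i = 0`, matching the
pieces of `IsSplineAux` (this matters only for `k = 0`). -/
noncomputable def truncPow (k n : ℕ) (ξ : ℕ → ℝ) (i : ℕ) (t : ℝ) : ℝ :=
  if t ∈ Icc (ξ 0) (ξ (n + 1)) ∧ (i = 0 ∨ ξ i < t) then (t - ξ i) ^ k else 0

variable {k n : ℕ} {ξ : ℕ → ℝ}

theorem truncPow_of_notMem {i : ℕ} {t : ℝ} (ht : t ∉ Icc (ξ 0) (ξ (n + 1))) :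
    truncPow k n ξ i t = 0 :=
  if_neg fun h => ht h.1

theorem truncPow_of_inPiece (hξ : StrictMonoOn ξ (Iic (n + 1))) {i m : ℕ} {t : ℝ}
    (hi : i ≤ n) (hm : m ≤ n) (ht : InPiece ξ i t) :
    truncPow k n ξ m t = if m ≤ i then (t - ξ m) ^ k else 0 := by
  have hle {a b : ℕ} (hab : a ≤ b) (hb : b ≤ n + 1) : ξ a ≤ ξ b :=
    hξ.monotoneOn (mem_Iic.2 (hab.trans hb)) (mem_Iic.2 hb) hab
  have htI : t ∈ Icc (ξ 0) (ξ (n + 1)) := by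
    rcases ht with ⟨h1, h2⟩ | ⟨rfl, rfl⟩
    · exact ⟨(hle (Nat.zero_le i) (by omega)).trans h1.le, h2.trans (hle (by omega) le_rfl)⟩
    · exact ⟨le_rfl, hle (Nat.zero_le _) le_rfl⟩
  unfold truncPow
  split_ifs with hcond hmi hmi
  · rfl
  · obtain ⟨-, hm0 | hmt⟩ := hcond
    · omega
    · rcases ht with ⟨-, h2⟩ | ⟨rfl, rfl⟩
      · linarith [hle (show i + 1 ≤ m by omega) (by omega)]
      · linarith [hle (Nat.zero_le m) (by omega)]
  · refine absurd ⟨htI, ?_⟩ hcond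
    rcases ht with ⟨h1, -⟩ | ⟨rfl, rfl⟩
    · exact (Nat.eq_zero_or_pos m).imp id fun _ => (hle hmi (by omega)).trans_lt h1
    · exact Or.inl (by omega)
  · rfl

theorem linearIndependent_truncPow (hξ : StrictMonoOn ξ (Iic (n + 1))) :
    LinearIndependent ℝ fun i : Fin (n + 1) => truncPow k n ξ i := by
  refine linearIndependent_of_det_apply_ne_zero _ (fun m : Fin (n + 1) => ξ (m + 1)) ?_
  have hval (m i : Fin (n + 1)) : truncPow k n ξ i (ξ (m + 1)) =
      if i ≤ m then (ξ (m + 1) - ξ i) ^ k else 0 :=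
    truncPow_of_inPiece hξ (by omega) (by omega) (Or.inl
      ⟨hξ (mem_Iic.2 (by omega)) (mem_Iic.2 (by omega)) (by omega), le_rfl⟩)
  have hlower :
      (Matrix.of fun m i : Fin (n + 1) => truncPow k n ξ i (ξ (m + 1))).IsLowerTriangular :=
    fun m i hmi => by
      rw [Matrix.of_apply, hval, if_neg (not_le.2 (OrderDual.toDual_lt_toDual.1 hmi))]
  rw [Matrix.det_of_isLowerTriangular _ hlower, Finset.prod_ne_zero_iff]
  intro m _
  rw [Matrix.of_apply, hval, if_pos le_rfl]
  exact pow_ne_zero _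
    (sub_ne_zero.2 (hξ (mem_Iic.2 (by omega)) (mem_Iic.2 (by omega)) (by omega)).ne')

variable (k ξ) in
noncomputable def truncPowComb (n : ℕ) : (Fin (n + 1) → ℝ) →ₗ[ℝ] ℝ → ℝ :=
  Fintype.linearCombination ℝ fun i : Fin (n + 1) => truncPow k n ξ i

theorem truncPowComb_apply (c : Fin (n + 1) → ℝ) (t : ℝ) :
    truncPowComb k ξ n c t = ∑ m, c m * truncPow k n ξ m t := by
  simp [truncPowComb, Fintype.linearCombination_apply]

theorem truncPowComb_apply_of_notMem (c : Fin (n + 1) → ℝ) {t : ℝ}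
    (ht : t ∉ Icc (ξ 0) (ξ (n + 1))) : truncPowComb k ξ n c t = 0 := by
  simp [truncPowComb_apply, truncPow_of_notMem ht]

theorem truncPowComb_injective (hξ : StrictMonoOn ξ (Iic (n + 1))) :
    Function.Injective (truncPowComb k ξ n) :=
  (linearIndependent_truncPow hξ).fintypeLinearCombination_injective

variable (k ξ) in
noncomputable def piecePoly (c : Fin (n + 1) → ℝ) (i : ℕ) : ℝ[X] :=
  ∑ m : Fin (n + 1), if (m : ℕ) ≤ i then C (c m) * (X - C (ξ m)) ^ k else 0

theorem natDegree_piecePoly_le (c : Fin (n + 1) → ℝ) (i : ℕ) :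
    (piecePoly k ξ c i).natDegree ≤ k := by
  refine natDegree_sum_le_of_forall_le _ _ fun m _ => ?_
  split_ifs
  · exact (natDegree_C_mul_le _ _).trans (by rw [natDegree_pow, natDegree_X_sub_C, mul_one])
  · simp

theorem eval_iterate_derivative_piecePoly (c : Fin (n + 1) → ℝ) (i j : ℕ) (x : ℝ) :
    (derivative^[j] (piecePoly k ξ c i)).eval x =
      k.descFactorial j *
        ∑ m : Fin (n + 1), if (m : ℕ) ≤ i then c m * (x - ξ m) ^ (k - j) else 0 := by
  simp only [piecePoly, iterate_derivative_sum, eval_finsetSum, Finset.mul_sum]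
  refine Finset.sum_congr rfl fun m _ => ?_
  split_ifs
  · simp [iterate_derivative_C_mul, iterate_derivative_X_sub_pow]
    ring
  · simp

theorem eval_piecePoly (c : Fin (n + 1) → ℝ) (i : ℕ) (x : ℝ) :
    (piecePoly k ξ c i).eval x =
      ∑ m : Fin (n + 1), if (m : ℕ) ≤ i then c m * (x - ξ m) ^ k else 0 := by
  simpa using eval_iterate_derivative_piecePoly (k := k) (ξ := ξ) c i 0 x

theorem truncPowComb_apply_of_inPiece (hξ : StrictMonoOn ξ (Iic (n + 1)))
    (c : Fin (n + 1) → ℝ) {i : ℕ} {t : ℝ} (hi : i ≤ n) (ht : InPiece ξ i t) :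
    truncPowComb k ξ n c t = (piecePoly k ξ c i).eval t := by
  rw [truncPowComb_apply, eval_piecePoly]
  refine Finset.sum_congr rfl fun m _ => ?_
  rw [truncPow_of_inPiece hξ hi (by omega) ht, mul_ite, mul_zero]

theorem piecePoly_zero (c : Fin (n + 1) → ℝ) :
    piecePoly k ξ c 0 = C (c 0) * (X - C (ξ 0)) ^ k := by
  simp [piecePoly, Fin.val_eq_zero_iff]

theorem piecePoly_succ (c : Fin (n + 1) → ℝ) {i : ℕ} (hi : i < n) :
    piecePoly k ξ c (i + 1) =
      piecePoly k ξ c i + C (c ⟨i + 1, by omega⟩) * (X - C (ξ (i + 1))) ^ k := by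
  rw [piecePoly, piecePoly, ← Fintype.sum_ite_eq' (⟨i + 1, by omega⟩ : Fin (n + 1))
    fun m => C (c m) * (X - C (ξ m)) ^ k, ← Finset.sum_add_distrib]
  refine Finset.sum_congr rfl fun m _ => ?_
  simp only [Fin.ext_iff]
  split_ifs <;> first | omega | simp

theorem iterate_derivative_piecePoly_eval_knot_zero (c : Fin (n + 1) → ℝ) {j : ℕ}
    (hj : j < k) :
    (derivative^[j] (piecePoly k ξ c 0)).eval (ξ 0) = 0 := by
  rw [eval_iterate_derivative_piecePoly, Finset.sum_eq_zero, mul_zero]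
  intro m _
  split_ifs with hm
  · rw [show (m : ℕ) = 0 by omega, sub_self, zero_pow (by omega), mul_zero]
  · rfl

theorem iterate_derivative_piecePoly_succ_eval_knot (c : Fin (n + 1) → ℝ) (i : ℕ) {j : ℕ}
    (hj : j < k) :
    (derivative^[j] (piecePoly k ξ c (i + 1))).eval (ξ (i + 1)) =
      (derivative^[j] (piecePoly k ξ c i)).eval (ξ (i + 1)) := by
  rw [eval_iterate_derivative_piecePoly, eval_iterate_derivative_piecePoly]
  congr 1
  refine Finset.sum_congr rfl fun m _ => ?_
  split_ifs with h1 h2 h2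
  · rfl
  · rw [show (m : ℕ) = i + 1 by omega, sub_self, zero_pow (by omega), mul_zero]
  · omega
  · rfl

variable (k ξ) in
/-- Row `e` encodes the vanishing of the derivative of order `k - 1 - e` at `ξ (n + 1)`. -/
def rightBoundaryMatrix (n : ℕ) : Matrix (Fin k) (Fin (n + 1)) ℝ :=
  Matrix.of fun e i => (ξ (n + 1) - ξ i) ^ ((e : ℕ) + 1)

theorem mulVec_rightBoundaryMatrix_surjective (hk : k ≤ n + 1)
    (hξ : StrictMonoOn ξ (Iic (n + 1))) :
    Function.Surjective (rightBoundaryMatrix k ξ n).mulVec := by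
  refine Matrix.mulVec_surjective_of_isUnit_det_submatrix (Fin.castLE hk) (Ne.isUnit ?_)
  have hmem (i : Fin k) : (i : ℕ) ∈ Iic (n + 1) := mem_Iic.2 (by omega)
  rw [show (rightBoundaryMatrix k ξ n).submatrix id (Fin.castLE hk) =
      Matrix.of fun e i : Fin k => (ξ (n + 1) - ξ i) ^ ((e : ℕ) + 1) from rfl,
    Matrix.det_of_pow_succ]
  refine mul_ne_zero (Matrix.det_vandermonde_ne_zero_iff.2 fun i i' h => ?_)
    (Finset.prod_ne_zero_iff.2 fun i _ =>
      sub_ne_zero.2 (hξ (hmem i) (mem_Iic.2 le_rfl) (by omega)).ne')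
  exact Fin.ext (hξ.injOn (hmem i) (hmem i') (sub_right_injective h))

theorem finrank_ker_rightBoundaryMatrix (hk : k ≤ n + 1) (hξ : StrictMonoOn ξ (Iic (n + 1))) :
    Module.finrank ℝ (LinearMap.ker (rightBoundaryMatrix k ξ n).mulVecLin) = n + 1 - k := by
  have := LinearMap.finrank_range_add_finrank_ker (rightBoundaryMatrix k ξ n).mulVecLin
  rw [LinearMap.range_eq_top.2 (mulVec_rightBoundaryMatrix_surjective hk hξ), finrank_top,
    Module.finrank_fin_fun, Module.finrank_fin_fun] at this
  omega

theorem rightBoundaryMatrix_mulVec_eq_zero_iff (c : Fin (n + 1) → ℝ) :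
    rightBoundaryMatrix k ξ n *ᵥ c = 0 ↔
      ∀ j < k, (derivative^[j] (piecePoly k ξ c n)).eval (ξ (n + 1)) = 0 := by
  have hrow (j : ℕ) (hj : j < k) :
      (derivative^[j] (piecePoly k ξ c n)).eval (ξ (n + 1)) = 0 ↔
        (rightBoundaryMatrix k ξ n *ᵥ c) ⟨k - 1 - j, by omega⟩ = 0 := by
    have hfac : (k.descFactorial j : ℝ) ≠ 0 := by
      exact_mod_cast (Nat.descFactorial_pos.2 hj.le).ne'
    have hexp : k - 1 - j + 1 = k - j := by omega
    rw [eval_iterate_derivative_piecePoly, mul_eq_zero, or_iff_right hfac]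
    simp only [Matrix.mulVec, dotProduct, rightBoundaryMatrix, Matrix.of_apply, hexp, Fin.is_le,
      if_true, mul_comm]
  constructor
  · intro h j hj
    rw [hrow j hj, h, Pi.zero_apply]
  · intro h
    funext e
    have := (hrow (k - 1 - e) (by omega)).1 (h _ (by omega))
    rwa [show (⟨k - 1 - (k - 1 - e), by omega⟩ : Fin k) = e from Fin.ext (by simp; omega)] at this

theorem truncPowComb_mem_splineZB (hξ : StrictMonoOn ξ (Iic (n + 1))) {c : Fin (n + 1) → ℝ}
    (hc : rightBoundaryMatrix k ξ n *ᵥ c = 0) : truncPowComb k ξ n c ∈ SplineZB k n ξ := by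
  refine ⟨fun t ht => truncPowComb_apply_of_notMem c ht, piecePoly k ξ c,
    ⟨fun i _ => natDegree_piecePoly_le c i,
      truncPowComb_apply_of_inPiece hξ c (Nat.zero_le n) (Or.inr ⟨rfl, rfl⟩),
      fun i hi t ht => truncPowComb_apply_of_inPiece hξ c hi (Or.inl ht),
      fun i _ j hj => (iterate_derivative_piecePoly_succ_eval_knot c i hj).symm⟩,
    fun j hj => ⟨iterate_derivative_piecePoly_eval_knot_zero c hj,
      (rightBoundaryMatrix_mulVec_eq_zero_iff c).1 hc j hj⟩⟩

theorem exists_truncPowComb_eq_of_mem_splineZB (hξ : StrictMonoOn ξ (Iic (n + 1)))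
    {S : ℝ → ℝ} (hS : S ∈ SplineZB k n ξ) :
    ∃ c, rightBoundaryMatrix k ξ n *ᵥ c = 0 ∧ truncPowComb k ξ n c = S := by
  obtain ⟨hout, p, hspline, hbc⟩ := hS
  have ⟨hdeg, _, _, hsmooth⟩ := hspline
  -- `c m` is the jump of the `k`-th coefficient across the knot `ξ m`
  let c : Fin (n + 1) → ℝ := fun m => (p m - if (m : ℕ) = 0 then 0 else p (m - 1)).coeff k
  have hp : ∀ i ≤ n, p i = piecePoly k ξ c i := by
    intro i hi
    induction i with
    | zero =>
      rw [piecePoly_zero]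
      simpa [c] using eq_C_mul_X_sub_C_pow_of_iterate_derivative_eval_eq_zero (hdeg 0 hi)
        fun j hj => (hbc j hj).1
    | succ i ih =>
      have hjump := eq_C_mul_X_sub_C_pow_of_iterate_derivative_eval_eq_zero
        ((natDegree_sub_le _ _).trans (max_le (hdeg _ hi) (hdeg i (by omega)))) fun j hj => by
          rw [iterate_derivative_sub, eval_sub, hsmooth i (by omega) j hj, sub_self]
      have hc : c ⟨i + 1, by omega⟩ = (p (i + 1) - p i).coeff k := by simp [c]
      rw [piecePoly_succ c hi, ← ih (by omega), hc, ← hjump, add_sub_cancel]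
  refine ⟨c, (rightBoundaryMatrix_mulVec_eq_zero_iff c).2 fun j hj => hp n le_rfl ▸ (hbc j hj).2,
    ?_⟩
  funext t
  by_cases ht : t ∈ Icc (ξ 0) (ξ (n + 1))
  · obtain ⟨i, hi, hti⟩ := exists_inPiece ht
    rw [truncPowComb_apply_of_inPiece hξ c hi hti, hspline.apply_eq_eval_of_inPiece hi hti,
      hp i hi]
  · rw [hout t ht, truncPowComb_apply_of_notMem c ht]

theorem splineZB_eq_map (hξ : StrictMonoOn ξ (Iic (n + 1))) :
    SplineZB k n ξ =
      (LinearMap.ker (rightBoundaryMatrix k ξ n).mulVecLin).map (truncPowComb k ξ n) := by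
  ext S
  constructor
  · intro hS
    obtain ⟨c, hc, rfl⟩ := exists_truncPowComb_eq_of_mem_splineZB hξ hS
    exact ⟨c, hc, rfl⟩
  · rintro ⟨c, hc, rfl⟩
    exact truncPowComb_mem_splineZB hξ hc

end Spline

/-- The space of order-`k` splines with zero boundary conditions over knots
`ξ 0 < ... < ξ (n+1)` has dimension `n - k + 1`, provided `n ≥ k`. -/
theorem spline_zero_boundary_dimension (k n : ℕ) (hkn : k ≤ n) (ξ : ℕ → ℝ)
    (hξ : ∀ i ≤ n, ξ i < ξ (i + 1)) :
    Module.finrank ℝ ↥(Submodule.span ℝ (SplineZB k n ξ)) = n - k + 1 := by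
  have hmono : StrictMonoOn ξ (Set.Iic (n + 1)) :=
    strictMonoOn_Iic_of_lt_succ fun m hm => hξ m (by omega)
  rw [Spline.splineZB_eq_map hmono, Submodule.span_eq,
    ← (Submodule.equivMapOfInjective _ (Spline.truncPowComb_injective hmono) _).finrank_eq,
    Spline.finrank_ker_rightBoundaryMatrix (by omega) hmono]
  omega
end

section
/- If n = k − 1 (i.e., there are k+1 knots), the only spline of smoothness order k over these knots satisfying the zero boundary conditions of order 0 through k−1 at both endpoints is the zero function. -/
/-!
Write `v m = (X - ξ m) ^ k`. A polynomial of degree at most `k` vanishing to order `k` at `a` is a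
multiple of `(X - a) ^ k`, so the first piece is a multiple of `v 0`, the last one of `v k`, and
consecutive pieces differ by a multiple of `v (i + 1)`. Going left to right, the piece `p i` lies in
the span of `v 0, …, v i`; going right to left, in the span of `v (i + 1), …, v k`. The `k + 1`
polynomials `v 0, …, v k` are linearly independent (their coefficients form a Vandermonde system),
so these spans meet only in `0` and every piece vanishes.
-/

open Polynomial

open Set Submodule

namespace Polynomial

theorem coeff_X_sub_C_pow_sub {R : Type*} [CommRing R] (a : R) {k s : ℕ} (hs : s ≤ k) :
    ((X - C a) ^ k).coeff (k - s) = (-a) ^ s * k.choose s := by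
  rw [sub_eq_add_neg, ← C_neg, coeff_X_add_C_pow, Nat.sub_sub_self hs, Nat.choose_symm hs]

section CharZero

variable {R : Type*} [CommRing R] [IsDomain R] [CharZero R]

theorem X_sub_C_pow_dvd_of_iterate_derivative_eval_eq_zero {q : R[X]} {a : R} {k : ℕ}
    (h : ∀ j < k, (derivative^[j] q).eval a = 0) : (X - C a) ^ k ∣ q := by
  rcases eq_or_ne q 0 with rfl | hq
  · exact dvd_zero _
  cases k with
  | zero => simp
  | succ k =>
    exact (le_rootMultiplicity_iff hq).1 <|
      (lt_rootMultiplicity_iff_isRoot_iterate_derivative hq).2 fun m hm => h m (by omega)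

theorem mem_span_X_sub_C_pow_of_iterate_derivative_eval_eq_zero {q : R[X]} {a : R} {k : ℕ}
    (hdeg : q.natDegree ≤ k) (h : ∀ j < k, (derivative^[j] q).eval a = 0) :
    q ∈ R ∙ (X - C a) ^ k := by
  have hq := eq_leadingCoeff_mul_of_monic_of_dvd_of_natDegree_le ((monic_X_sub_C a).pow k)
    (X_sub_C_pow_dvd_of_iterate_derivative_eval_eq_zero h) (by simpa)
  exact mem_span_singleton.2 ⟨q.leadingCoeff, by rw [smul_eq_C_mul, ← hq]⟩

end CharZero

theorem linearIndependent_X_sub_C_pow {K ι : Type*} [Field K] [CharZero K] [Fintype ι]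
    {a : ι → K} (ha : Function.Injective a) {k : ℕ} (hcard : Fintype.card ι ≤ k + 1) :
    LinearIndependent K fun i => (X - C (a i)) ^ k := by
  rw [Fintype.linearIndependent_iff]
  intro g hg
  have hmoments : ∀ s ≤ k, ∑ i, g i * (-a i) ^ s = 0 := by
    intro s hs
    have := congrArg (coeff · (k - s)) hg
    simp only [finsetSum_coeff, coeff_smul, coeff_X_sub_C_pow_sub _ hs, smul_eq_mul, coeff_zero,
      ← mul_assoc, ← Finset.sum_mul] at this
    exact (mul_eq_zero.1 this).resolve_right (Nat.cast_ne_zero.2 (Nat.choose_pos hs).ne')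
  let e := Fintype.equivFin ι
  have hvdm : (fun j => g (e.symm j)) = 0 := by
    refine Matrix.eq_zero_of_forall_pow_sum_mul_pow_eq_zero (f := fun j => -a (e.symm j))
      (neg_injective.comp (ha.comp e.symm.injective)) fun s => ?_
    rw [e.symm.sum_comp (fun i => g i * (-a i) ^ (s : ℕ))]
    exact hmoments s (by omega)
  intro i
  simpa using congrFun hvdm (e i)

end Polynomial

section SpanChain

variable {R M : Type*} [Ring R] [AddCommGroup M] [Module R M]

theorem span_singleton_le_span_image {ι : Type*} {v : ι → M} {s : Set ι} {j : ι} (hj : j ∈ s) :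
    R ∙ v j ≤ span R (v '' s) :=
  span_mono (singleton_subset_iff.2 (mem_image_of_mem v hj))

variable {v x : ℕ → M} {n : ℕ}

theorem mem_span_image_Iic_of_sub_mem_span_singleton (h0 : x 0 ∈ R ∙ v 0)
    (hstep : ∀ i < n, x (i + 1) - x i ∈ R ∙ v (i + 1)) {i : ℕ} (hi : i ≤ n) :
    x i ∈ span R (v '' Iic i) := by
  induction i with
  | zero => exact span_singleton_le_span_image self_mem_Iic h0
  | succ i ih =>
    have hx : x (i + 1) = x i + (x (i + 1) - x i) := by abel
    rw [hx]
    exact add_mem (span_mono (image_mono (Iic_subset_Iic.2 i.le_succ)) (ih (by omega)))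
      (span_singleton_le_span_image self_mem_Iic (hstep i hi))

theorem mem_span_image_Ioc_of_sub_mem_span_singleton (hn : x n ∈ R ∙ v (n + 1))
    (hstep : ∀ i < n, x (i + 1) - x i ∈ R ∙ v (i + 1)) {i : ℕ} (hi : i ≤ n) :
    x i ∈ span R (v '' Ioc i (n + 1)) := by
  induction hi using Nat.decreasingInduction with
  | self => exact span_singleton_le_span_image (right_mem_Ioc.2 n.lt_succ_self) hn
  | of_succ i hi ih =>
    have hx : x i = x (i + 1) - (x (i + 1) - x i) := by abel
    rw [hx]
    exact sub_mem (span_mono (image_mono (Ioc_subset_Ioc_left i.le_succ)) ih)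
      (span_singleton_le_span_image (mem_Ioc.2 ⟨i.lt_succ_self, by omega⟩) (hstep i hi))

end SpanChain

theorem exists_le_mem_Ioc_succ {α : Type*} [LinearOrder α] (ξ : ℕ → α) {t : α}
    (h0 : ξ 0 < t) :
    ∀ {n : ℕ}, t ≤ ξ (n + 1) → ∃ i ≤ n, t ∈ Ioc (ξ i) (ξ (i + 1))
  | 0, hn => ⟨0, le_rfl, h0, hn⟩
  | n + 1, hn => by
    by_cases ht : ξ (n + 1) < t
    · exact ⟨n + 1, le_rfl, ht, hn⟩
    · obtain ⟨i, hi, hti⟩ := exists_le_mem_Ioc_succ ξ h0 (not_lt.1 ht)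
      exact ⟨i, hi.trans n.le_succ, hti⟩

namespace IsSplineAux

variable {k n : ℕ} {ξ : ℕ → ℝ} {p : ℕ → ℝ[X]} {S : ℝ → ℝ}

theorem succ_sub_mem_span (hS : IsSplineAux k n ξ p S) {i : ℕ} (hi : i < n) :
    p (i + 1) - p i ∈ ℝ ∙ (X - C (ξ (i + 1))) ^ k :=
  mem_span_X_sub_C_pow_of_iterate_derivative_eval_eq_zero
    ((natDegree_sub_le _ _).trans (max_le (hS.1 _ hi) (hS.1 _ hi.le)))
    fun j hj => by rw [iterate_derivative_sub, eval_sub, hS.2.2.2 i hi j hj, sub_self]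

theorem pieces_eq_zero_of_zeroBC (hS : IsSplineAux (n + 1) n ξ p S) (hbc : ZeroBC (n + 1) n ξ p)
    (hξ : StrictMonoOn ξ (Iic (n + 1))) {i : ℕ} (hi : i ≤ n) : p i = 0 := by
  set v : ℕ → ℝ[X] := fun m => (X - C (ξ m)) ^ (n + 1)
  have hfirst : p 0 ∈ ℝ ∙ v 0 := mem_span_X_sub_C_pow_of_iterate_derivative_eval_eq_zero
    (hS.1 0 n.zero_le) fun j hj => (hbc j hj).1
  have hlast : p n ∈ ℝ ∙ v (n + 1) := mem_span_X_sub_C_pow_of_iterate_derivative_eval_eq_zero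
    (hS.1 n le_rfl) fun j hj => (hbc j hj).2
  have hstep i (hi : i < n) := hS.succ_sub_mem_span hi
  have hleft := mem_span_image_Iic_of_sub_mem_span_singleton hfirst hstep hi
  have hright := mem_span_image_Ioc_of_sub_mem_span_singleton hlast hstep hi
  have hind : LinearIndepOn ℝ v (Iic (n + 1)) :=
    linearIndependent_X_sub_C_pow (a := fun m : Iic (n + 1) => ξ m) hξ.injOn.injective
      (by simp)
  have hdisj : Disjoint (span ℝ (v '' Iic i)) (span ℝ (v '' Ioc i (n + 1))) := by
    rw [← Iic_union_Ioc_eq_Iic (show i ≤ n + 1 by omega)] at hind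
    exact ((linearIndepOn_union_iff (Iic_disjoint_Ioc le_rfl)).1 hind).2.2
  exact disjoint_def.1 hdisj _ hleft hright

theorem eq_zero_of_pieces_eq_zero (hS : IsSplineAux k n ξ p S)
    (hout : ∀ t, t ∉ Icc (ξ 0) (ξ (n + 1)) → S t = 0) (hp : ∀ i ≤ n, p i = 0) : S = 0 := by
  funext t
  by_cases ht : t ∈ Icc (ξ 0) (ξ (n + 1))
  · rcases ht.1.eq_or_lt with rfl | h0
    · simp [hS.2.1, hp 0 n.zero_le]
    · obtain ⟨i, hi, hti⟩ := exists_le_mem_Ioc_succ ξ h0 ht.2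
      simp [hS.2.2.1 i hi t hti, hp i hi]
  · exact hout t ht

end IsSplineAux

/-- If `n = k - 1` (there are `k+1` knots), the only order-`k` spline with zero
boundary conditions is the zero function. -/
theorem spline_trivial_of_minimal_knots (k : ℕ) (hk : 1 ≤ k) (ξ : ℕ → ℝ)
    (hξ : ∀ i ≤ k - 1, ξ i < ξ (i + 1)) :
    ∀ S ∈ SplineZB k (k - 1) ξ, S = fun _ => 0 := by
  obtain ⟨n, rfl⟩ := Nat.exists_eq_add_of_le' hk
  rintro S ⟨hout, p, hS, hbc⟩
  rw [Nat.add_sub_cancel] at hξ hout hS hbc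
  have hmono : StrictMonoOn ξ (Iic (n + 1)) :=
    strictMonoOn_Iic_of_lt_succ fun m hm => hξ m (Nat.le_of_lt_succ hm)
  exact hS.eq_zero_of_pieces_eq_zero hout fun _ => hS.pieces_eq_zero_of_zeroBC hbc hmono
end

section
/- The linear map sending a spline of order k over knots ξ₀ < ... < ξ_{n+1} (with zero boundary conditions) to its matrix of derivative values at the knots is a linear isomorphism onto the space of (n+2)×(k+1) matrices satisfying the Taylor-expansion compatibility conditions s_{i+1,r} = Σ_{j=0}^{k−r} (ξ_{i+1}−ξ_i)^j/j! · s_{i,j+r} (for appropriate one-sided conventions on the k-th column) together with the zero boundary conditions; moreover, equipping the matrix space with the inner product ⟨S, S̃⟩ = Σ_{i=0}^n Σ_{l=0}^{2k} (ξ_{i+1}−ξ_i)^{l+1}/(l+1) Σ_{m=max(l−k,0)}^{min(l,k)} s_{i,l−m} s̃_{i,m}/((l−m)! m!), this map is an isometry with respect to the L² inner product on splines. -/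
open Polynomial

/-- The (one-sided) matrix of derivative values at the knots of a spline with
polynomial pieces `p`: row `i ≤ n` holds the derivatives of `p i` at `ξ i`, the
last row holds the derivatives of `p n` at `ξ (n+1)` with the `k`-th entry set
to `0`; entries outside the index range are `0`. -/
noncomputable def derMat (k n : ℕ) (ξ : ℕ → ℝ) (p : ℕ → Polynomial ℝ) : ℕ → ℕ → ℝ :=
  fun i j =>
    if k < j ∨ n + 1 < i then 0
    else if i ≤ n then (derivative^[j] (p i)).eval (ξ i)
    else if j < k then (derivative^[j] (p n)).eval (ξ (n + 1))
    else 0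

/-- The admissible matrices: Taylor-expansion compatibility between consecutive
rows together with the zero boundary conditions. -/
def AdmMat (k n : ℕ) (ξ : ℕ → ℝ) : Set (ℕ → ℕ → ℝ) :=
  {u | (∀ i j, (k < j ∨ n + 1 < i) → u i j = 0) ∧ u (n + 1) k = 0 ∧
    (∀ i ≤ n, ∀ r < k,
      u (i + 1) r = ∑ j ∈ Finset.range (k - r + 1),
        (ξ (i + 1) - ξ i) ^ j / (Nat.factorial j) * u i (j + r)) ∧
    (∀ j < k, u 0 j = 0 ∧ u (n + 1) j = 0)}

/-- The inner product of two derivative matrices mirroring the `L²` inner product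
of the corresponding splines. -/
noncomputable def matInner (k n : ℕ) (ξ : ℕ → ℝ) (u v : ℕ → ℕ → ℝ) : ℝ :=
  ∑ i ∈ Finset.range (n + 1), ∑ l ∈ Finset.range (2 * k + 1),
    (ξ (i + 1) - ξ i) ^ (l + 1) / (l + 1) *
      ∑ m ∈ Finset.Icc (l - k) (min l k),
        u i (l - m) * v i m / (Nat.factorial (l - m) * Nat.factorial m)

/-! A polynomial of degree `≤ k` is determined by its jet at a point through Taylor's formula
`P x = ∑_{j ≤ k} (x - a)^j / j! * P⁽ʲ⁾ a`. So the pieces of a spline are determined by the rows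
of its derivative matrix, and expanding piece `i` around `ξ i` and evaluating at `ξ (i + 1)`
gives the compatibility conditions. Conversely the Taylor polynomials of the rows of an admissible
matrix glue to a spline, since compatibility is exactly `C^{k-1}` matching at the internal knots.
For the isometry, multiply the two Taylor expansions on each piece, integrate the powers
`(t - ξ i)^l` over `[ξ i, ξ (i + 1)]` and add up the pieces. -/

open Finset Nat

namespace Polynomial

variable {K : Type*} [Field K]

noncomputable def ofDerivsAt (k : ℕ) (a : K) (u : ℕ → K) : K[X] :=
  ∑ j ∈ range (k + 1), C (u j / j !) * (X - C a) ^ j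

theorem natDegree_ofDerivsAt_le (k : ℕ) (a : K) (u : ℕ → K) :
    (ofDerivsAt k a u).natDegree ≤ k := by
  refine natDegree_sum_le_of_forall_le _ _ fun j hj => ?_
  refine natDegree_C_mul_le _ _ |>.trans ?_
  rw [natDegree_pow, natDegree_X_sub_C, mul_one]
  simpa [Nat.lt_succ_iff] using hj

variable [CharZero K]

theorem iterate_derivative_ofDerivsAt_eval {k r : ℕ} (hr : r ≤ k) (a : K) (u : ℕ → K) :
    (derivative^[r] (ofDerivsAt k a u)).eval a = u r := by
  have hterm : ∀ j, (derivative^[r] (C (u j / j !) * (X - C a) ^ j)).eval a =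
      if j = r then u r else 0 := by
    intro j
    rw [iterate_derivative_C_mul, iterate_derivative_X_sub_pow]
    simp only [eval_mul, eval_C, eval_smul, eval_pow, eval_sub, eval_X, sub_self]
    rcases lt_trichotomy j r with h | rfl | h
    · simp [Nat.descFactorial_eq_zero_iff_lt.2 h, h.ne]
    · simp [Nat.descFactorial_self, Nat.factorial_ne_zero]
    · simp [h.ne', Nat.sub_ne_zero_of_lt h]
  simp only [ofDerivsAt, iterate_derivative_sum, eval_finsetSum, hterm, sum_ite_eq',
    mem_range, if_pos (Nat.lt_succ_of_le hr)]

theorem eval_eq_sum_range_iterate_derivative {P : K[X]} {k : ℕ} (hP : P.natDegree ≤ k)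
    (a x : K) :
    P.eval x = ∑ j ∈ range (k + 1), (x - a) ^ j / j ! * (derivative^[j] P).eval a := by
  conv_lhs => rw [← sum_taylor_eq P a]
  rw [eval_sum, sum_over_range' _ (by simp) (k + 1) (by rw [natDegree_taylor]; omega)]
  refine sum_congr rfl fun j _ => ?_
  rw [taylor_coeff, ← factorial_smul_hasseDeriv]
  have hj : (j ! : K) ≠ 0 := Nat.cast_ne_zero.2 j.factorial_ne_zero
  simp [nsmul_eq_mul]
  field_simp

theorem iterate_derivative_eval_eq_sum_range {P : K[X]} {k r : ℕ} (hP : P.natDegree ≤ k)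
    (a x : K) :
    (derivative^[r] P).eval x =
      ∑ j ∈ range (k - r + 1), (x - a) ^ j / j ! * (derivative^[j + r] P).eval a := by
  have hdeg : (derivative^[r] P).natDegree ≤ k - r :=
    (natDegree_iterate_derivative P r).trans (by omega)
  simp only [eval_eq_sum_range_iterate_derivative hdeg a x, ← Function.iterate_add_apply]

theorem eq_of_iterate_derivative_eval_eq {P Q : K[X]} {k : ℕ} (hP : P.natDegree ≤ k)
    (hQ : Q.natDegree ≤ k) (a : K)
    (h : ∀ j ≤ k, (derivative^[j] P).eval a = (derivative^[j] Q).eval a) : P = Q := by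
  refine funext fun x => ?_
  rw [eval_eq_sum_range_iterate_derivative hP a, eval_eq_sum_range_iterate_derivative hQ a]
  exact sum_congr rfl fun j hj => by rw [h j (by simpa [Nat.lt_succ_iff] using hj)]

end Polynomial

theorem Finset.sum_range_sum_range_eq_sum_range_sum_Icc {M : Type*} [AddCommMonoid M] (k : ℕ)
    (f : ℕ → ℕ → M) :
    ∑ j ∈ range (k + 1), ∑ m ∈ range (k + 1), f j m =
      ∑ l ∈ range (2 * k + 1), ∑ m ∈ Icc (l - k) (min l k), f (l - m) m := by
  rw [← sum_product', sum_sigma']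
  refine sum_nbij' (fun x => ⟨x.1 + x.2, x.2⟩) (fun x => (x.1 - x.2, x.2)) ?_ ?_ ?_ ?_ ?_ <;>
    rintro ⟨j, m⟩ h <;>
    simp only [mem_product, mem_sigma, mem_range, mem_Icc, le_min_iff] at h <;>
    simp only [mem_product, mem_sigma, mem_range, mem_Icc, le_min_iff, and_true,
      Sigma.mk.injEq, heq_eq_eq, add_tsub_cancel_right]
  all_goals omega

theorem integral_sub_pow (a b : ℝ) (N : ℕ) :
    ∫ t in a..b, (t - a) ^ N = (b - a) ^ (N + 1) / (N + 1) := by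
  simp [intervalIntegral.integral_comp_sub_right (fun s => s ^ N) a, integral_pow]

namespace Polynomial

theorem eval_mul_eval_eq_sum_range {K : Type*} [Field K] [CharZero K] {P Q : K[X]} {k : ℕ}
    (hP : P.natDegree ≤ k) (hQ : Q.natDegree ≤ k) (a x : K) :
    P.eval x * Q.eval x = ∑ l ∈ range (2 * k + 1),
      (∑ m ∈ Icc (l - k) (min l k), (derivative^[l - m] P).eval a * (derivative^[m] Q).eval a /
        ((l - m) ! * m !)) * (x - a) ^ l := by
  rw [eval_eq_sum_range_iterate_derivative hP a, eval_eq_sum_range_iterate_derivative hQ a,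
    sum_mul_sum, sum_range_sum_range_eq_sum_range_sum_Icc]
  refine sum_congr rfl fun l _ => ?_
  rw [sum_mul]
  refine sum_congr rfl fun m hm => ?_
  have hml : l - m + m = l := by simp only [mem_Icc, le_min_iff] at hm; omega
  rw [← hml, pow_add, hml]
  ring

theorem integral_eval_mul_eval {P Q : ℝ[X]} {k : ℕ} (hP : P.natDegree ≤ k)
    (hQ : Q.natDegree ≤ k) (a b : ℝ) :
    ∫ t in a..b, P.eval t * Q.eval t = ∑ l ∈ range (2 * k + 1), (b - a) ^ (l + 1) / (l + 1) *
      ∑ m ∈ Icc (l - k) (min l k), (derivative^[l - m] P).eval a * (derivative^[m] Q).eval a /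
        ((l - m) ! * m !) := by
  simp only [eval_mul_eval_eq_sum_range hP hQ a]
  rw [intervalIntegral.integral_finsetSum fun l _ =>
    Continuous.intervalIntegrable (by fun_prop) _ _]
  refine sum_congr rfl fun l _ => ?_
  rw [intervalIntegral.integral_const_mul, integral_sub_pow, mul_comm]

end Polynomial

section Spline

variable {k n : ℕ} {ξ : ℕ → ℝ}

theorem derMat_of_le (p : ℕ → ℝ[X]) {i j : ℕ} (hi : i ≤ n) (hj : j ≤ k) :
    derMat k n ξ p i j = (derivative^[j] (p i)).eval (ξ i) := by
  rw [derMat, if_neg (by omega), if_pos hi]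

theorem derMat_succ_of_lt {p : ℕ → ℝ[X]} {S : ℝ → ℝ} (hp : IsSplineAux k n ξ p S) {i r : ℕ}
    (hi : i ≤ n) (hr : r < k) :
    derMat k n ξ p (i + 1) r = (derivative^[r] (p i)).eval (ξ (i + 1)) := by
  rcases hi.lt_or_eq with hi | rfl
  · rw [derMat_of_le p hi hr.le, hp.2.2.2 i hi r hr]
  · rw [derMat, if_neg (by omega), if_neg (by omega), if_pos hr]

theorem derMat_smul_add_smul (p q : ℕ → ℝ[X]) (a b : ℝ) :
    derMat k n ξ (fun i => a • p i + b • q i) =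
      fun i j => a * derMat k n ξ p i j + b * derMat k n ξ q i j := by
  funext i j
  simp only [derMat]
  split_ifs <;> simp [iterate_map_add, iterate_derivative_smul]

theorem derMat_mem_admMat {p : ℕ → ℝ[X]} {S : ℝ → ℝ} (hp : IsSplineAux k n ξ p S)
    (hbc : ZeroBC k n ξ p) : derMat k n ξ p ∈ AdmMat k n ξ := by
  refine ⟨fun i j h => by rw [derMat, if_pos h], ?_, fun i hi r hr => ?_, fun j hj => ?_⟩
  · rw [derMat, if_neg (by omega), if_neg (by omega), if_neg (lt_irrefl k)]
  · rw [derMat_succ_of_lt hp hi hr,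
      iterate_derivative_eval_eq_sum_range (hp.1 i hi) (ξ i) (ξ (i + 1))]
    exact sum_congr rfl fun j hj => by
      rw [derMat_of_le p hi (by simp only [mem_range] at hj; omega)]
  · rw [derMat_of_le p (zero_le n) hj.le, derMat_succ_of_lt hp le_rfl hj]
    exact hbc j hj

theorem derivs_eq_of_derMat_eq {p q : ℕ → ℝ[X]} (hp : ∀ i ≤ n, (p i).natDegree ≤ k)
    (hq : ∀ i ≤ n, (q i).natDegree ≤ k) (h : derMat k n ξ p = derMat k n ξ q) :
    ∀ i ≤ n, p i = q i := fun i hi =>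
  eq_of_iterate_derivative_eval_eq (hp i hi) (hq i hi) (ξ i) fun j hj => by
    rw [← derMat_of_le p hi hj, ← derMat_of_le q hi hj, h]

theorem eq_of_isSplineAux {p q : ℕ → ℝ[X]} {S T : ℝ → ℝ} (hS : IsSplineAux k n ξ p S)
    (hT : IsSplineAux k n ξ q T) (hpq : ∀ i ≤ n, p i = q i)
    (hS₀ : ∀ t, t ∉ Set.Icc (ξ 0) (ξ (n + 1)) → S t = 0)
    (hT₀ : ∀ t, t ∉ Set.Icc (ξ 0) (ξ (n + 1)) → T t = 0) : S = T := by
  funext t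
  by_cases ht : t ∈ Set.Icc (ξ 0) (ξ (n + 1))
  · rcases ht.1.eq_or_lt with rfl | h₀
    · rw [hS.2.1, hT.2.1, hpq 0 (zero_le n)]
    · obtain ⟨i, hi, hti⟩ := Set.mem_iUnion₂.1 (Ioc_subset_biUnion_Ioc (n + 1) ξ ⟨h₀, ht.2⟩)
      have hin : i ≤ n := Nat.lt_succ_iff.1 (mem_range.1 hi)
      rw [hS.2.2.1 i hin t hti, hT.2.2.1 i hin t hti, hpq i hin]
  · rw [hS₀ t ht, hT₀ t ht]

theorem knot_le_knot (hξ : ∀ i ≤ n, ξ i ≤ ξ (i + 1)) {i j : ℕ} (hij : i ≤ j) (hj : j ≤ n + 1) :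
    ξ i ≤ ξ j := by
  induction j, hij using Nat.le_induction with
  | base => rfl
  | succ j _ ih => exact (ih (by omega)).trans (hξ j (by omega))

theorem disjoint_Ioc_knots (hξ : ∀ i ≤ n, ξ i ≤ ξ (i + 1)) {i j : ℕ} (hj : j ≤ n)
    (hij : i < j) : Disjoint (Set.Ioc (ξ i) (ξ (i + 1))) (Set.Ioc (ξ j) (ξ (j + 1))) :=
  Set.Ioc_disjoint_Ioc_of_le (knot_le_knot hξ hij (by omega))

noncomputable def splineOfPieces (n : ℕ) (ξ : ℕ → ℝ) (p : ℕ → ℝ[X]) : ℝ → ℝ :=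
  Function.update
    (∑ i ∈ range (n + 1), (Set.Ioc (ξ i) (ξ (i + 1))).indicator fun t => (p i).eval t)
    (ξ 0) ((p 0).eval (ξ 0))

theorem splineOfPieces_of_mem_Ioc (hξ : ∀ i ≤ n, ξ i ≤ ξ (i + 1)) (p : ℕ → ℝ[X]) {i : ℕ}
    (hi : i ≤ n) {t : ℝ} (ht : t ∈ Set.Ioc (ξ i) (ξ (i + 1))) :
    splineOfPieces n ξ p t = (p i).eval t := by
  have ht₀ : t ≠ ξ 0 := (lt_of_le_of_lt (knot_le_knot hξ (zero_le i) (by omega)) ht.1).ne'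
  rw [splineOfPieces, Function.update_of_ne ht₀, Finset.sum_apply,
    sum_eq_single_of_mem i (mem_range.2 (Nat.lt_succ_of_le hi)), Set.indicator_of_mem ht]
  intro j hj hji
  have hjn : j ≤ n := Nat.lt_succ_iff.1 (mem_range.1 hj)
  refine Set.indicator_of_notMem (fun htj => ?_) _
  rcases hji.lt_or_gt with h | h
  · exact (disjoint_Ioc_knots hξ hi h).notMem_of_mem_left htj ht
  · exact (disjoint_Ioc_knots hξ hjn h).notMem_of_mem_left ht htj

theorem splineOfPieces_of_notMem (hξ : ∀ i ≤ n, ξ i ≤ ξ (i + 1)) (p : ℕ → ℝ[X]) {t : ℝ}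
    (ht : t ∉ Set.Icc (ξ 0) (ξ (n + 1))) : splineOfPieces n ξ p t = 0 := by
  have ht₀ : t ≠ ξ 0 := by
    rintro rfl
    exact ht ⟨le_rfl, knot_le_knot hξ (zero_le _) le_rfl⟩
  rw [splineOfPieces, Function.update_of_ne ht₀, Finset.sum_apply]
  refine sum_eq_zero fun i hi => Set.indicator_of_notMem (fun hti => ht ?_) _
  have hin : i ≤ n := Nat.lt_succ_iff.1 (mem_range.1 hi)
  exact ⟨(knot_le_knot hξ (zero_le i) (by omega)).trans hti.1.le,
    hti.2.trans (knot_le_knot hξ (Nat.succ_le_succ hin) le_rfl)⟩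

theorem isSplineAux_splineOfPieces (hξ : ∀ i ≤ n, ξ i ≤ ξ (i + 1)) {p : ℕ → ℝ[X]}
    (hdeg : ∀ i ≤ n, (p i).natDegree ≤ k)
    (hmatch : ∀ i < n, ∀ j < k, (derivative^[j] (p i)).eval (ξ (i + 1)) =
      (derivative^[j] (p (i + 1))).eval (ξ (i + 1))) :
    IsSplineAux k n ξ p (splineOfPieces n ξ p) :=
  ⟨hdeg, Function.update_self .., fun _ hi _ => splineOfPieces_of_mem_Ioc hξ p hi, hmatch⟩

theorem iterate_derivative_ofDerivsAt_eval_succ {u : ℕ → ℕ → ℝ} (hu : u ∈ AdmMat k n ξ)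
    {i r : ℕ} (hi : i ≤ n) (hr : r < k) :
    (derivative^[r] (ofDerivsAt k (ξ i) (u i))).eval (ξ (i + 1)) = u (i + 1) r := by
  rw [iterate_derivative_eval_eq_sum_range (natDegree_ofDerivsAt_le k _ _) (ξ i),
    hu.2.2.1 i hi r hr]
  exact sum_congr rfl fun j hj => by
    rw [iterate_derivative_ofDerivsAt_eval (by simp only [mem_range] at hj; omega)]

theorem derMat_ofDerivsAt {u : ℕ → ℕ → ℝ} (hu : u ∈ AdmMat k n ξ) :
    derMat k n ξ (fun i => ofDerivsAt k (ξ i) (u i)) = u := by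
  funext i j
  simp only [derMat]
  split_ifs with h₁ h₂ h₃
  · exact (hu.1 i j h₁).symm
  · exact iterate_derivative_ofDerivsAt_eval (by omega) _ _
  · obtain rfl : i = n + 1 := by omega
    exact iterate_derivative_ofDerivsAt_eval_succ hu le_rfl h₃
  · obtain ⟨rfl, rfl⟩ : i = n + 1 ∧ j = k := by omega
    exact hu.2.1.symm

theorem existsUnique_spline_derMat_eq (hξ : ∀ i ≤ n, ξ i ≤ ξ (i + 1)) {u : ℕ → ℕ → ℝ}
    (hu : u ∈ AdmMat k n ξ) :
    ∃! S : ℝ → ℝ, S ∈ SplineZB k n ξ ∧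
      ∃ p : ℕ → ℝ[X], IsSplineAux k n ξ p S ∧ ZeroBC k n ξ p ∧ derMat k n ξ p = u := by
  set p : ℕ → ℝ[X] := fun i => ofDerivsAt k (ξ i) (u i)
  have hdeg : ∀ i ≤ n, (p i).natDegree ≤ k := fun i _ => natDegree_ofDerivsAt_le k _ _
  have hspline : IsSplineAux k n ξ p (splineOfPieces n ξ p) :=
    isSplineAux_splineOfPieces hξ hdeg fun i hi j hj => by
      rw [iterate_derivative_ofDerivsAt_eval_succ hu hi.le hj,
        iterate_derivative_ofDerivsAt_eval hj.le]
  have hbc : ZeroBC k n ξ p := fun j hj =>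
    ⟨(iterate_derivative_ofDerivsAt_eval hj.le _ _).trans (hu.2.2.2 j hj).1,
      (iterate_derivative_ofDerivsAt_eval_succ hu le_rfl hj).trans (hu.2.2.2 j hj).2⟩
  refine ⟨splineOfPieces n ξ p, ⟨⟨fun t => splineOfPieces_of_notMem hξ p, p, hspline, hbc⟩,
    p, hspline, hbc, derMat_ofDerivsAt hu⟩, ?_⟩
  rintro T ⟨⟨hT₀, -⟩, q, hq, -, hqu⟩
  refine eq_of_isSplineAux hq hspline ?_ hT₀ fun t => splineOfPieces_of_notMem hξ p
  exact derivs_eq_of_derMat_eq hq.1 hdeg (hqu.trans (derMat_ofDerivsAt hu).symm)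

theorem integral_mul_eq_matInner (hξ : ∀ i ≤ n, ξ i ≤ ξ (i + 1)) {p q : ℕ → ℝ[X]}
    {S T : ℝ → ℝ} (hp : IsSplineAux k n ξ p S) (hq : IsSplineAux k n ξ q T) :
    ∫ t in (ξ 0)..(ξ (n + 1)), S t * T t = matInner k n ξ (derMat k n ξ p) (derMat k n ξ q) := by
  have hpiece : ∀ i ≤ n, Set.EqOn (fun t => S t * T t) (fun t => (p i).eval t * (q i).eval t)
      (Set.Ioc (ξ i) (ξ (i + 1))) := fun i hi t ht => by
    simp only [hp.2.2.1 i hi t ht, hq.2.2.1 i hi t ht]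
  have hint : ∀ i < n + 1, IntervalIntegrable (fun t => S t * T t) MeasureTheory.volume
      (ξ i) (ξ (i + 1)) := fun i hi => by
    rw [intervalIntegrable_congr (Set.uIoc_of_le (hξ i (by omega)) ▸ hpiece i (by omega))]
    exact Continuous.intervalIntegrable (by fun_prop) _ _
  rw [← intervalIntegral.sum_integral_adjacent_intervals hint, matInner]
  refine sum_congr rfl fun i hi => ?_
  have hin : i ≤ n := Nat.lt_succ_iff.1 (mem_range.1 hi)
  rw [intervalIntegral.integral_congr_Ioo_of_le (hξ i hin)
      fun t ht => hpiece i hin (Set.Ioo_subset_Ioc_self ht),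
    integral_eval_mul_eval (hp.1 i hin) (hq.1 i hin)]
  refine sum_congr rfl fun l _ => congrArg _ (sum_congr rfl fun m hm => ?_)
  simp only [mem_Icc, le_min_iff] at hm
  rw [derMat_of_le p hin (by omega), derMat_of_le q hin hm.2.2]

end Spline

theorem spline_derivative_matrix_isomorphism_isometry_general (k n : ℕ)
    (ξ : ℕ → ℝ) (hξ : ∀ i ≤ n, ξ i < ξ (i + 1)) :
    (∀ (S : ℝ → ℝ) (p : ℕ → Polynomial ℝ), IsSplineAux k n ξ p S → ZeroBC k n ξ p →
      derMat k n ξ p ∈ AdmMat k n ξ) ∧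
    (∀ (p q : ℕ → Polynomial ℝ) (a b : ℝ),
      derMat k n ξ (fun i => a • p i + b • q i) =
        fun i j => a * derMat k n ξ p i j + b * derMat k n ξ q i j) ∧
    (∀ u ∈ AdmMat k n ξ, ∃! S : ℝ → ℝ, S ∈ SplineZB k n ξ ∧
      ∃ p : ℕ → Polynomial ℝ, IsSplineAux k n ξ p S ∧ ZeroBC k n ξ p ∧
        derMat k n ξ p = u) ∧
    (∀ (S T : ℝ → ℝ) (p q : ℕ → Polynomial ℝ),
      IsSplineAux k n ξ p S → ZeroBC k n ξ p →
      IsSplineAux k n ξ q T → ZeroBC k n ξ q →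
      (∫ t in (ξ 0)..(ξ (n + 1)), S t * T t) =
        matInner k n ξ (derMat k n ξ p) (derMat k n ξ q)) := by
  have hξ' : ∀ i ≤ n, ξ i ≤ ξ (i + 1) := fun i hi => (hξ i hi).le
  exact ⟨fun _ _ hp hbc => derMat_mem_admMat hp hbc, derMat_smul_add_smul,
    fun _ hu => existsUnique_spline_derMat_eq hξ' hu,
    fun _ _ _ _ hp _ hq _ => integral_mul_eq_matInner hξ' hp hq⟩

/-- The map sending a zero-boundary spline to its matrix of derivative values at the
knots is a linear bijection onto the admissible matrices and an isometry between the
`L²` inner product of splines and the matrix inner product. -/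
theorem spline_derivative_matrix_isomorphism_isometry (k n : ℕ) (hkn : k ≤ n)
    (ξ : ℕ → ℝ) (hξ : ∀ i ≤ n, ξ i < ξ (i + 1)) :
    (∀ (S : ℝ → ℝ) (p : ℕ → Polynomial ℝ), IsSplineAux k n ξ p S → ZeroBC k n ξ p →
      derMat k n ξ p ∈ AdmMat k n ξ) ∧
    (∀ (p q : ℕ → Polynomial ℝ) (a b : ℝ),
      derMat k n ξ (fun i => a • p i + b • q i) =
        fun i j => a * derMat k n ξ p i j + b * derMat k n ξ q i j) ∧
    (∀ u ∈ AdmMat k n ξ, ∃! S : ℝ → ℝ, S ∈ SplineZB k n ξ ∧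
      ∃ p : ℕ → Polynomial ℝ, IsSplineAux k n ξ p S ∧ ZeroBC k n ξ p ∧
        derMat k n ξ p = u) ∧
    (∀ (S T : ℝ → ℝ) (p q : ℕ → Polynomial ℝ),
      IsSplineAux k n ξ p S → ZeroBC k n ξ p →
      IsSplineAux k n ξ q T → ZeroBC k n ξ q →
      (∫ t in (ξ 0)..(ξ (n + 1)), S t * T t) =
        matInner k n ξ (derMat k n ξ p) (derMat k n ξ q)) :=
  spline_derivative_matrix_isomorphism_isometry_general k n ξ hξ
end

section
/- Let U be a (k+2)×(k+1) matrix of derivative values of an order-k spline at k+2 consecutive knots ξ₀ < ... < ξ_{k+1} (right-hand-side convention for the k-th derivative). If the first row u_{0·} and the last row u_{k+1·} are given, then all remaining entries of U are uniquely determined. -/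
/-!
The difference `u - v` again satisfies the Taylor relations and has zero first row. Since the
relations propagate each row to the next except for its `k`-th entry, such a matrix is the
derivative matrix of the spline `∑ m, b m * (x - ξ (m + 1))₊ ^ k / k!` whose `k`-th derivative
jumps by `b m` at the interior knots. A vanishing last row is then a Vandermonde system in the
distinct nonzero distances `ξ (k + 1) - ξ (m + 1)`, so all jumps vanish.
-/

open Finset Nat

theorem add_pow_div_factorial {K : Type*} [Field K] [CharZero K] (c d : K) (n : ℕ) :
    (c + d) ^ n / n ! = ∑ j ∈ range (n + 1), c ^ j / j ! * (d ^ (n - j) / (n - j)!) := by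
  rw [add_pow, sum_div]
  refine sum_congr rfl fun j hj => ?_
  have hfac : (n.choose j : K) * j ! * (n - j)! = n ! := by
    exact_mod_cast choose_mul_factorial_mul_factorial (Nat.lt_succ_iff.mp (mem_range.mp hj))
  have hchoose : (n.choose j : K) ≠ 0 :=
    Nat.cast_ne_zero.mpr (choose_pos (Nat.lt_succ_iff.mp (mem_range.mp hj))).ne'
  have hj : (j ! : K) ≠ 0 := Nat.cast_ne_zero.mpr (factorial_ne_zero j)
  have hnj : ((n - j)! : K) ≠ 0 := Nat.cast_ne_zero.mpr (factorial_ne_zero _)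
  rw [← hfac]
  field_simp

def TaylorCompatible (k : ℕ) (ξ : ℕ → ℝ) (u : ℕ → ℕ → ℝ) : Prop :=
  ∀ i, 1 ≤ i → i ≤ k + 1 → ∀ r < k,
    u i r = ∑ j ∈ range (k - r + 1), (ξ i - ξ (i - 1)) ^ j / j ! * u (i - 1) (j + r)

namespace TaylorCompatible

variable {k : ℕ} {ξ : ℕ → ℝ} {u v : ℕ → ℕ → ℝ}

theorem sub (hu : TaylorCompatible k ξ u) (hv : TaylorCompatible k ξ v) :
    TaylorCompatible k ξ (u - v) := by
  intro i hi₁ hi₂ r hr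
  simp only [Pi.sub_apply, hu i hi₁ hi₂ r hr, hv i hi₁ hi₂ r hr, ← sum_sub_distrib, mul_sub]

theorem eq_of_eq_row_zero_of_eq_col (hu : TaylorCompatible k ξ u) (hv : TaylorCompatible k ξ v)
    (hrow : ∀ j ≤ k, u 0 j = v 0 j) (hcol : ∀ i ≤ k + 1, u i k = v i k) :
    ∀ i ≤ k + 1, ∀ j ≤ k, u i j = v i j := by
  intro i
  induction i with
  | zero => exact fun _ => hrow
  | succ i ih =>
    intro hi j hj
    rcases hj.lt_or_eq with hj | rfl
    · rw [hu (i + 1) (by omega) hi j hj, hv (i + 1) (by omega) hi j hj, add_tsub_cancel_right]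
      exact sum_congr rfl fun l hl => by
        rw [ih (by omega) (l + j) (by have := mem_range.mp hl; omega)]
    · exact hcol _ hi

end TaylorCompatible

/-- Row `i`, column `r` holds the (right-hand) `r`-th derivative at `ξ i` of the spline
`∑ m, b m * (x - ξ (m + 1))₊ ^ k / k!`, whose `k`-th derivative jumps by `b m` at `ξ (m + 1)`. -/
noncomputable def splineOfJumps (k : ℕ) (ξ b : ℕ → ℝ) (i r : ℕ) : ℝ :=
  ∑ m ∈ range i, b m * ((ξ i - ξ (m + 1)) ^ (k - r) / (k - r)!)

theorem splineOfJumps_zero (k : ℕ) (ξ b : ℕ → ℝ) (r : ℕ) : splineOfJumps k ξ b 0 r = 0 := by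
  simp [splineOfJumps]

theorem splineOfJumps_self (k : ℕ) (ξ b : ℕ → ℝ) (i : ℕ) :
    splineOfJumps k ξ b i k = ∑ m ∈ range i, b m := by
  simp [splineOfJumps]

theorem taylorCompatible_splineOfJumps (k : ℕ) (ξ b : ℕ → ℝ) :
    TaylorCompatible k ξ (splineOfJumps k ξ b) := by
  rintro (_ | i) hi₁ - r hr
  · omega
  have hkr : k - r ≠ 0 := by omega
  simp only [splineOfJumps, add_tsub_cancel_right, mul_sum, sum_range_succ _ i, sub_self,
    zero_pow hkr, zero_div, mul_zero, add_zero]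
  rw [sum_comm]
  refine sum_congr rfl fun m _ => ?_
  have hsplit : ξ (i + 1) - ξ (m + 1) = (ξ (i + 1) - ξ i) + (ξ i - ξ (m + 1)) := by ring
  rw [hsplit, add_pow_div_factorial, mul_sum]
  refine sum_congr rfl fun j _ => ?_
  rw [show k - (j + r) = k - r - j by omega]
  ring

theorem TaylorCompatible.eq_splineOfJumps {k : ℕ} {ξ : ℕ → ℝ} {w : ℕ → ℕ → ℝ}
    (hw : TaylorCompatible k ξ w) (hrow : ∀ j ≤ k, w 0 j = 0) :
    ∀ i ≤ k + 1, ∀ j ≤ k, w i j = splineOfJumps k ξ (fun m => w (m + 1) k - w m k) i j := by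
  refine hw.eq_of_eq_row_zero_of_eq_col (taylorCompatible_splineOfJumps _ _ _)
    (fun j hj => by rw [hrow j hj, splineOfJumps_zero]) fun i _ => ?_
  rw [splineOfJumps_self, sum_range_sub (fun m => w m k), hrow k le_rfl, sub_zero]

theorem Matrix.eq_zero_of_forall_sum_mul_pow_succ_eq_zero {R : Type*} [CommRing R] [IsDomain R]
    {n : ℕ} {f v : Fin n → R} (hf : Function.Injective f) (hf0 : ∀ j, f j ≠ 0)
    (hfv : ∀ i : Fin n, ∑ j, v j * f j ^ ((i : ℕ) + 1) = 0) : v = 0 := by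
  have h : (fun j => v j * f j) = 0 :=
    Matrix.eq_zero_of_forall_pow_sum_mul_pow_eq_zero hf fun i => by
      rw [← hfv i]
      exact sum_congr rfl fun j _ => by ring
  funext j
  exact (mul_eq_zero.mp (congrFun h j)).resolve_right (hf0 j)

theorem eq_zero_of_splineOfJumps_last_row_eq_zero {k : ℕ} {ξ b : ℕ → ℝ}
    (hξ : StrictMonoOn ξ (Set.Iic (k + 1)))
    (hlast : ∀ r < k, splineOfJumps k ξ b (k + 1) r = 0) : ∀ m < k, b m = 0 := by
  set x : Fin k → ℝ := fun m => ξ (k + 1) - ξ (m + 1)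
  have hmem : ∀ m : Fin k, (m : ℕ) + 1 ∈ Set.Iic (k + 1) := fun m => Set.mem_Iic.mpr (by omega)
  have hx : Function.Injective x := fun m m' h => by
    have := hξ.injOn (hmem m) (hmem m') (sub_right_injective h)
    ext; omega
  have hx0 : ∀ m, x m ≠ 0 := fun m =>
    (sub_pos.mpr (hξ (hmem m) (Set.mem_Iic.mpr le_rfl) (by omega))).ne'
  have hb := Matrix.eq_zero_of_forall_sum_mul_pow_succ_eq_zero (v := fun m : Fin k => b m) hx hx0
    fun s => by
      have h := hlast (k - (s + 1)) (by omega)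
      rw [splineOfJumps, sum_range_succ, sub_self, zero_pow (by omega), zero_div, mul_zero,
        add_zero, show k - (k - (s + 1)) = s + 1 by omega] at h
      simp_rw [mul_div_assoc', ← sum_div, div_eq_zero_iff] at h
      rw [← h.resolve_right (by positivity), ← Fin.sum_univ_eq_sum_range]
  exact fun m hm => congrFun hb ⟨m, hm⟩

/-- For the matrix of derivative values of an order-`k` spline at `k+2` consecutive
knots (RHS convention for the `k`-th derivative, satisfying the Taylor compatibility
relations), the first row together with the last row (its `k`-th entry being
disregarded) uniquely determines all the remaining entries. -/
theorem spline_matrix_first_last_row_unique (k : ℕ) (ξ : ℕ → ℝ)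
    (hξ : ∀ i ≤ k, ξ i < ξ (i + 1)) (u v : ℕ → ℕ → ℝ)
    (hu : ∀ i, 1 ≤ i → i ≤ k + 1 → ∀ r < k,
      u i r = ∑ j ∈ Finset.range (k - r + 1),
        (ξ i - ξ (i - 1)) ^ j / (Nat.factorial j) * u (i - 1) (j + r))
    (hv : ∀ i, 1 ≤ i → i ≤ k + 1 → ∀ r < k,
      v i r = ∑ j ∈ Finset.range (k - r + 1),
        (ξ i - ξ (i - 1)) ^ j / (Nat.factorial j) * v (i - 1) (j + r))
    (hfirst : ∀ j ≤ k, u 0 j = v 0 j)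
    (hlast : ∀ j < k, u (k + 1) j = v (k + 1) j) :
    ∀ i ≤ k, ∀ j ≤ k, u i j = v i j := by
  have hspline := (TaylorCompatible.sub hu hv).eq_splineOfJumps fun j hj =>
    sub_eq_zero.mpr (hfirst j hj)
  have hmono : StrictMonoOn ξ (Set.Iic (k + 1)) :=
    strictMonoOn_Iic_of_lt_succ fun m hm => hξ m (Nat.lt_succ_iff.mp hm)
  have hjumps := eq_zero_of_splineOfJumps_last_row_eq_zero hmono fun r hr => by
    rw [← hspline (k + 1) le_rfl r hr.le]
    exact sub_eq_zero.mpr (hlast r hr)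
  intro i hi j hj
  rw [← sub_eq_zero]
  change (u - v) i j = 0
  rw [hspline i (by omega) j hj]
  exact sum_eq_zero fun m hm =>
    mul_eq_zero_of_left (hjumps m (by have := mem_range.mp hm; omega)) _
end
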